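/- arXiv:1610.03136 — 5 statements merged into one kernel-verified Lean document; each statement's English description precedes it below -/
import Mathlib

section
/- Let G and H be unital associative F-algebras with all triple commutators zero. For n > 1 and g_i ∈ G, h_i ∈ H, the left-normed commutator c_{2n} = [g_1 ⊗ h_1, g_2 ⊗ h_2, ..., g_{2n} ⊗ h_{2n}] in G ⊗ H equals [g_1,g_2][g_3,g_4]···[g_{2n-1},g_{2n}] ⊗ [h_1 h_2, h_3][h_4,h_5]···[h_{2n-2},h_{2n-1}] h_{2n} + [g_2 g_1, g_3][g_4,g_5]···[g_{2n-2},g_{2n-1}] g_{2n} ⊗ [h_1,h_2][h_3,h_4]···[h_{2n-1},h_{2n}]. -/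
open scoped TensorProduct

/-- Left-normed commutator: `lc a [b₁,...,bₙ] = [a, b₁, ..., bₙ]`. -/
def lc {A : Type*} [Ring A] : A → List A → A
  | a, [] => a
  | a, b :: l => lc ⁅a, b⁆ l

/-- Left-normed commutator of a list; `lcomm [a₁,...,aₙ] = [a₁,...,aₙ]`, `lcomm [] = 0`. -/
def lcomm {A : Type*} [Ring A] : List A → A
  | [] => 0
  | a :: l => lc a l

/-- `Tideal A n` = two-sided ideal of `A` generated by all left-normed commutators of length `n`. -/
def Tideal (A : Type*) [Ring A] (n : ℕ) : TwoSidedIdeal A :=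
  TwoSidedIdeal.span {x | ∃ l : List A, l.length = n ∧ x = lcomm l}

/-!
Write `c₂ₙ = Pₙ ⊗ Xₙ + Yₙ ⊗ Sₙ` with `Pₙ = [g₁,g₂]⋯[g₂ₙ₋₁,g₂ₙ]` and `Sₙ = [h₁,h₂]⋯[h₂ₙ₋₁,h₂ₙ]`,
which are central because commutators are. Bracketing twice more with `gᵢ ⊗ hᵢ` kills every
term containing a bracket with a central element, so the shape persists with
`Xₙ₊₁ = [Xₙ, h₂ₙ₊₁] h₂ₙ₊₂` and `Yₙ₊₁ = [Yₙ, g₂ₙ₊₁] g₂ₙ₊₂`, starting from `X₁ = h₁h₂`, `Y₁ = g₂g₁`.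
From `n = 2` on, `[Xₙ, h]` again pulls the central factor out, giving the closed form.
-/

section Ring

variable {A : Type*} [Ring A]

lemma lc_append_singleton (b : A) (l : List A) (a : A) : lc a (l ++ [b]) = ⁅lc a l, b⁆ := by
  induction l generalizing a with
  | nil => rfl
  | cons c l ih => exact ih ⁅a, c⁆

lemma lcomm_ofFn_succ_succ (x : ℕ → A) (m : ℕ) :
    lcomm (List.ofFn fun i : Fin (m + 1 + 1) => x i)
      = ⁅lcomm (List.ofFn fun i : Fin (m + 1) => x i), x (m + 1)⁆ := by
  rw [List.ofFn_succ' (fun i : Fin (m + 1 + 1) => x i), List.concat_eq_append, List.ofFn_succ,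
    List.ofFn_succ (f := fun i : Fin (m + 1) => x i)]
  exact lc_append_singleton _ _ _

lemma add_lie_of_ring (x y z : A) : ⁅x + y, z⁆ = ⁅x, z⁆ + ⁅y, z⁆ := by
  simp only [Ring.lie_def, add_mul, mul_add]
  abel

lemma mul_lie_of_commute {p b : A} (a : A) (h : Commute p b) : ⁅p * a, b⁆ = p * ⁅a, b⁆ := by
  rw [Ring.lie_def, Ring.lie_def, mul_sub, ← mul_assoc b, ← h.eq, mul_assoc, mul_assoc]

def pairLieProd (a : ℕ → A) (n : ℕ) : A :=
  (List.ofFn fun i : Fin n => ⁅a (2 * i + 1), a (2 * i + 2)⁆).prod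

lemma pairLieProd_succ (a : ℕ → A) (n : ℕ) :
    pairLieProd a (n + 1) = pairLieProd a n * ⁅a (2 * n + 1), a (2 * n + 2)⁆ := by
  simp only [pairLieProd, List.ofFn_succ', List.concat_eq_append, List.prod_append,
    List.prod_singleton, Fin.val_castSucc, Fin.val_last]

/-- `lieMulChain x a n = [⋯[[x, a₃] a₄, a₅] a₆ ⋯, a₂ₙ₊₁] a₂ₙ₊₂`. -/
def lieMulChain (x : A) (a : ℕ → A) : ℕ → A
  | 0 => x
  | n + 1 => ⁅lieMulChain x a n, a (2 * n + 3)⁆ * a (2 * n + 4)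

variable (hA : ∀ a b c : A, ⁅⁅a, b⁆, c⁆ = 0)
include hA

lemma commute_lie_of_lie_lie_eq_zero (a b c : A) : Commute ⁅a, b⁆ c :=
  commute_iff_lie_eq.mpr (hA a b c)

lemma commute_pairLieProd (a : ℕ → A) (n : ℕ) (y : A) : Commute (pairLieProd a n) y :=
  Commute.list_prod_left _ _ fun z hz => by
    obtain ⟨i, rfl⟩ := List.mem_ofFn.mp hz
    exact commute_lie_of_lie_lie_eq_zero hA _ _ _

lemma lieMulChain_succ_eq (x : A) (a : ℕ → A) (k : ℕ) :
    lieMulChain x a (k + 1) = ⁅x, a 3⁆ * pairLieProd (fun j => a (j + 3)) k * a (2 * k + 4) := by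
  induction k with
  | zero => simp [lieMulChain, pairLieProd]
  | succ k ih =>
    rw [lieMulChain, ih, mul_lie_of_commute _ ((commute_lie_of_lie_lie_eq_zero hA _ _ _).mul_left
      (commute_pairLieProd hA _ _ _)), pairLieProd_succ, mul_assoc (⁅x, a 3⁆)]
    rfl

end Ring

section TensorProduct

variable {F : Type*} [Field F] {G H : Type*} [Ring G] [Algebra F G] [Ring H] [Algebra F H]

lemma lie_tmul_tmul (a c : G) (b d : H) :
    ⁅a ⊗ₜ[F] b, c ⊗ₜ[F] d⁆ = ⁅a, c⁆ ⊗ₜ[F] (b * d) + (c * a) ⊗ₜ[F] ⁅b, d⁆ := by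
  simp only [Ring.lie_def, Algebra.TensorProduct.tmul_mul_tmul, TensorProduct.sub_tmul,
    TensorProduct.tmul_sub]
  abel

variable (hG : ∀ a b c : G, ⁅⁅a, b⁆, c⁆ = 0) (hH : ∀ a b c : H, ⁅⁅a, b⁆, c⁆ = 0)
include hG hH

lemma lie_lie_central_tmul_add_tmul_central {P : G} {S : H} (hP : ∀ y, Commute P y)
    (hS : ∀ y, Commute S y) (X : H) (Y : G) (b c : G) (b' c' : H) :
    ⁅⁅P ⊗ₜ[F] X + Y ⊗ₜ[F] S, b ⊗ₜ[F] b'⁆, c ⊗ₜ[F] c'⁆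
      = (P * ⁅b, c⁆) ⊗ₜ[F] (⁅X, b'⁆ * c') + (⁅Y, b⁆ * c) ⊗ₜ[F] (S * ⁅b', c'⁆) := by
  have hPb : ⁅P ⊗ₜ[F] X, b ⊗ₜ[F] b'⁆ = (P * b) ⊗ₜ[F] ⁅X, b'⁆ := by
    rw [lie_tmul_tmul, (hP b).lie_eq, TensorProduct.zero_tmul, zero_add, (hP b).eq]
  have hYS : ⁅Y ⊗ₜ[F] S, b ⊗ₜ[F] b'⁆ = ⁅Y, b⁆ ⊗ₜ[F] (S * b') := by
    rw [lie_tmul_tmul, (hS b').lie_eq, TensorProduct.tmul_zero, add_zero]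
  have hPbc : ⁅(P * b) ⊗ₜ[F] ⁅X, b'⁆, c ⊗ₜ[F] c'⁆ = (P * ⁅b, c⁆) ⊗ₜ[F] (⁅X, b'⁆ * c') := by
    rw [lie_tmul_tmul, hH, TensorProduct.tmul_zero, add_zero, mul_lie_of_commute _ (hP c)]
  have hYSc : ⁅⁅Y, b⁆ ⊗ₜ[F] (S * b'), c ⊗ₜ[F] c'⁆ = (⁅Y, b⁆ * c) ⊗ₜ[F] (S * ⁅b', c'⁆) := by
    rw [lie_tmul_tmul, hG, TensorProduct.zero_tmul, zero_add, mul_lie_of_commute _ (hS c'),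
      ← (commute_lie_of_lie_lie_eq_zero hG Y b c).eq]
  rw [add_lie_of_ring, hPb, hYS, add_lie_of_ring, hPbc, hYSc]

lemma lcomm_ofFn_tmul_two_mul_add_two (g : ℕ → G) (h : ℕ → H) (n : ℕ) :
    lcomm (List.ofFn fun i : Fin (2 * n + 2) => (g (i + 1) ⊗ₜ[F] h (i + 1) : G ⊗[F] H))
      = pairLieProd g (n + 1) ⊗ₜ[F] lieMulChain (h 1 * h 2) h n
        + lieMulChain (g 2 * g 1) g n ⊗ₜ[F] pairLieProd h (n + 1) := by
  induction n with
  | zero =>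
    simp [lcomm, lc, pairLieProd, lieMulChain, lie_tmul_tmul]
  | succ n ih =>
    rw [show 2 * (n + 1) + 2 = 2 * n + 2 + 1 + 1 by ring,
      lcomm_ofFn_succ_succ (fun j => g (j + 1) ⊗ₜ[F] h (j + 1)) (2 * n + 2),
      lcomm_ofFn_succ_succ (fun j => g (j + 1) ⊗ₜ[F] h (j + 1)) (2 * n + 1), ih,
      lie_lie_central_tmul_add_tmul_central hG hH (commute_pairLieProd hG g _)
        (commute_pairLieProd hH h _), pairLieProd_succ g (n + 1), pairLieProd_succ h (n + 1)]
    rfl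

end TensorProduct

/-- Lemma 2.1 of [DK17], even case: formula for
`c₂ₙ = [g₁ ⊗ h₁, …, g₂ₙ ⊗ h₂ₙ]` in `G ⊗ H` when `n > 1`. The elements `g i, h i` are indexed
by `1, …, 2n`. -/
theorem statement_4 (F : Type*) [Field F]
    (G H : Type*) [Ring G] [Algebra F G] [Ring H] [Algebra F H]
    (hG : ∀ a b c : G, ⁅⁅a, b⁆, c⁆ = 0) (hH : ∀ a b c : H, ⁅⁅a, b⁆, c⁆ = 0)
    (n : ℕ) (hn : 1 < n) (g : ℕ → G) (h : ℕ → H) :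
    lcomm (List.ofFn fun i : Fin (2 * n) => (g (i + 1) ⊗ₜ[F] h (i + 1) : G ⊗[F] H))
      = (List.ofFn fun i : Fin n => ⁅g (2 * i + 1), g (2 * i + 2)⁆).prod
          ⊗ₜ[F] (⁅h 1 * h 2, h 3⁆
            * (List.ofFn fun i : Fin (n - 2) => ⁅h (2 * i + 4), h (2 * i + 5)⁆).prod
            * h (2 * n))
        + (⁅g 2 * g 1, g 3⁆
            * (List.ofFn fun i : Fin (n - 2) => ⁅g (2 * i + 4), g (2 * i + 5)⁆).prod
            * g (2 * n))
          ⊗ₜ[F] (List.ofFn fun i : Fin n => ⁅h (2 * i + 1), h (2 * i + 2)⁆).prod := by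
  obtain ⟨k, rfl⟩ : ∃ k, n = k + 2 := ⟨n - 2, by omega⟩
  have hlen : 2 * (k + 2) = 2 * (k + 1) + 2 := by ring
  rw [hlen, lcomm_ofFn_tmul_two_mul_add_two hG hH, lieMulChain_succ_eq hG,
    lieMulChain_succ_eq hH, Nat.add_sub_cancel]
  -- only `pairLieProd` and index arithmetic such as `2 * i + 1 + 3 = 2 * i + 4` remain
  rfl
end

section
/- Let G and H be unital associative F-algebras with all triple commutators zero, and suppose that [f_1, f_2][f_3, f_4]···[f_{2n-1}, f_{2n}] = 0 for all f_j ∈ H. Then the tensor product algebra G ⊗ H is Lie nilpotent of class at most 2n, i.e., [u_1, u_2, ..., u_{2n+1}] = 0 for all u_i ∈ G ⊗ H. -/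
/-!
Commutators are central in `G` and in `H`. Give `g ⊗ x` weight `μ` if `x` is a multiple of a
product of `⌈μ/2⌉` commutators, or if `g` is central and `x` is a multiple of a product of `⌊μ/2⌋`
commutators. In
`⁅g ⊗ x, g' ⊗ y⁆ = g'g ⊗ ⁅x, y⁆ + ⁅g, g'⁆ ⊗ xy`
the first term gains a commutator factor on the `H` side (centrality lets the new factor join the
product), and the second has a central `G` side and vanishes when `g` is central; so bracketing
with `G ⊗ H` raises the weight by one. Every element has weight `0`, and by hypothesis elements of
weight `2n` are zero.
-/

open scoped TensorProduct

section CommutatorProducts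

variable {H : Type*} [Ring H]

variable (H) in
def commProdMultiples (j : ℕ) : Set H :=
  {x | ∃ L : List (H × H), L.length = j ∧ ∃ h, x = (L.map fun p => ⁅p.1, p.2⁆).prod * h}

theorem mem_commProdMultiples_zero (x : H) : x ∈ commProdMultiples H 0 :=
  ⟨[], rfl, x, by simp⟩

theorem mul_mem_commProdMultiples {j : ℕ} {x : H} (hx : x ∈ commProdMultiples H j) (y : H) :
    x * y ∈ commProdMultiples H j := by
  obtain ⟨L, hL, h, rfl⟩ := hx
  exact ⟨L, hL, h * y, by rw [mul_assoc]⟩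

section ProductsVanish

variable {n : ℕ}
  (hprod : ∀ f : ℕ → H, (List.ofFn fun i : Fin n => ⁅f (2 * i + 1), f (2 * i + 2)⁆).prod = 0)
include hprod

theorem prod_map_lie_eq_zero {L : List (H × H)} (hL : L.length = n) :
    (L.map fun p => ⁅p.1, p.2⁆).prod = 0 := by
  -- `f (2 * i + 1)` and `f (2 * i + 2)` are the two entries of `L[i]`
  let f : ℕ → H := fun k => if k % 2 = 1 then (L.getD ((k - 1) / 2) 0).1
    else (L.getD ((k - 1) / 2) 0).2
  convert hprod f using 2
  refine List.ext_getElem (by simp [hL]) fun i h₁ h₂ => ?_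
  have hi : i < L.length := by simpa using h₁
  have hdiv : (2 * i + 1) / 2 = i := by omega
  simp [f, hdiv, List.getElem?_eq_getElem hi]

theorem eq_zero_of_mem_commProdMultiples {x : H} (hx : x ∈ commProdMultiples H n) : x = 0 := by
  obtain ⟨L, hL, h, rfl⟩ := hx
  rw [prod_map_lie_eq_zero hprod hL, zero_mul]

end ProductsVanish

variable (hH : ∀ a b c : H, ⁅⁅a, b⁆, c⁆ = 0)
include hH

theorem commute_prod_map_lie (L : List (H × H)) (y : H) :
    Commute (L.map fun p => ⁅p.1, p.2⁆).prod y :=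
  Commute.list_prod_left _ _ <| by
    simp only [List.mem_map]
    rintro _ ⟨p, -, rfl⟩
    exact commute_iff_lie_eq.2 (hH p.1 p.2 y)

theorem lie_mem_commProdMultiples_succ {j : ℕ} {x : H} (hx : x ∈ commProdMultiples H j) (y : H) :
    ⁅x, y⁆ ∈ commProdMultiples H (j + 1) := by
  obtain ⟨L, hL, h, rfl⟩ := hx
  refine ⟨L ++ [(h, y)], by simp [hL], 1, ?_⟩
  rw [List.map_append, List.prod_append, List.map_singleton, List.prod_singleton, mul_one,
    Ring.lie_def, Ring.lie_def, mul_sub, ← mul_assoc y, ← (commute_prod_map_lie hH L y).eq]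
  simp only [mul_assoc]

theorem commProdMultiples_succ_subset (j : ℕ) :
    commProdMultiples H (j + 1) ⊆ commProdMultiples H j := by
  rintro _ ⟨_ | ⟨p, L⟩, hL, h, rfl⟩
  · simp at hL
  · refine ⟨L, by simpa using hL, ⁅p.1, p.2⁆ * h, ?_⟩
    rw [List.map_cons, List.prod_cons, ← mul_assoc, (commute_prod_map_lie hH L _).eq]

theorem commProdMultiples_antitone : Antitone (commProdMultiples H) :=
  antitone_nat_of_succ_le (commProdMultiples_succ_subset hH)

end CommutatorProducts

section TensorProduct

variable {R G H : Type*} [CommRing R] [Ring G] [Algebra R G] [Ring H] [Algebra R H]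

theorem lie_tmul_tmul_s6 (g g' : G) (x y : H) :
    ⁅g ⊗ₜ[R] x, g' ⊗ₜ[R] y⁆ = (g' * g) ⊗ₜ ⁅x, y⁆ + ⁅g, g'⁆ ⊗ₜ (x * y) := by
  simp only [Ring.lie_def, Algebra.TensorProduct.tmul_mul_tmul, TensorProduct.tmul_sub,
    TensorProduct.sub_tmul]
  abel

variable (R G H) in
def lieFiltration (μ : ℕ) : Submodule R (G ⊗[R] H) :=
  Submodule.span R (Set.image2 (· ⊗ₜ ·) Set.univ (commProdMultiples H ((μ + 1) / 2)) ∪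
    Set.image2 (· ⊗ₜ ·) (Set.center G) (commProdMultiples H (μ / 2)))

theorem tmul_mem_lieFiltration {μ : ℕ} (g : G) {x : H}
    (hx : x ∈ commProdMultiples H ((μ + 1) / 2)) : g ⊗ₜ[R] x ∈ lieFiltration R G H μ :=
  Submodule.subset_span (Or.inl (Set.mem_image2_of_mem trivial hx))

theorem tmul_mem_lieFiltration_of_mem_center {μ : ℕ} {d : G} (hd : d ∈ Set.center G) {x : H}
    (hx : x ∈ commProdMultiples H (μ / 2)) : d ⊗ₜ[R] x ∈ lieFiltration R G H μ :=
  Submodule.subset_span (Or.inr (Set.mem_image2_of_mem hd hx))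

theorem lieFiltration_zero : lieFiltration R G H 0 = ⊤ := by
  rw [eq_top_iff, ← TensorProduct.span_tmul_eq_top, Submodule.span_le]
  rintro _ ⟨g, x, rfl⟩
  exact tmul_mem_lieFiltration g (mem_commProdMultiples_zero x)

theorem lieFiltration_two_mul_eq_bot {n : ℕ}
    (hprod : ∀ f : ℕ → H, (List.ofFn fun i : Fin n => ⁅f (2 * i + 1), f (2 * i + 2)⁆).prod = 0) :
    lieFiltration R G H (2 * n) = ⊥ := by
  have h₁ : (2 * n + 1) / 2 = n := by omega
  have h₂ : 2 * n / 2 = n := by omega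
  rw [lieFiltration, h₁, h₂, Submodule.span_eq_bot]
  rintro _ (⟨g, -, x, hx, rfl⟩ | ⟨g, -, x, hx, rfl⟩) <;>
    simp [eq_zero_of_mem_commProdMultiples hprod hx]

theorem lie_tmul_mem_lieFiltration_succ (hG : ∀ a b c : G, ⁅⁅a, b⁆, c⁆ = 0)
    (hH : ∀ a b c : H, ⁅⁅a, b⁆, c⁆ = 0) {μ : ℕ} (g : G) {x : H}
    (hx : x ∈ commProdMultiples H ((μ + 1) / 2)) (g' : G) (y : H) :
    ⁅g ⊗ₜ[R] x, g' ⊗ₜ[R] y⁆ ∈ lieFiltration R G H (μ + 1) := by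
  have hgg' : ⁅g, g'⁆ ∈ Set.center G :=
    Semigroup.mem_center_iff.2 fun g'' => (commute_iff_lie_eq.2 (hG g g' g'')).eq.symm
  rw [lie_tmul_tmul_s6]
  refine add_mem (tmul_mem_lieFiltration _ ?_)
    (tmul_mem_lieFiltration_of_mem_center hgg' (mul_mem_commProdMultiples hx y))
  exact commProdMultiples_antitone hH (by omega) (lie_mem_commProdMultiples_succ hH hx y)

theorem lie_tmul_mem_lieFiltration_succ_of_mem_center (hH : ∀ a b c : H, ⁅⁅a, b⁆, c⁆ = 0)
    {μ : ℕ} {d : G} (hd : d ∈ Set.center G) {x : H} (hx : x ∈ commProdMultiples H (μ / 2))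
    (g' : G) (y : H) : ⁅d ⊗ₜ[R] x, g' ⊗ₜ[R] y⁆ ∈ lieFiltration R G H (μ + 1) := by
  have hdg' : ⁅d, g'⁆ = 0 := commute_iff_lie_eq.1 (Semigroup.mem_center_iff.1 hd g').symm
  rw [lie_tmul_tmul_s6, hdg', TensorProduct.zero_tmul, add_zero]
  refine tmul_mem_lieFiltration _ ?_
  exact commProdMultiples_antitone hH (by omega) (lie_mem_commProdMultiples_succ hH hx y)

attribute [local instance] LieRing.ofAssociativeRing

variable (hG : ∀ a b c : G, ⁅⁅a, b⁆, c⁆ = 0) (hH : ∀ a b c : H, ⁅⁅a, b⁆, c⁆ = 0)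
include hG hH

theorem lie_mem_lieFiltration_succ {μ : ℕ} {v : G ⊗[R] H} (hv : v ∈ lieFiltration R G H μ)
    (w : G ⊗[R] H) : ⁅v, w⁆ ∈ lieFiltration R G H (μ + 1) := by
  induction w using TensorProduct.induction_on with
  | zero => rw [lie_zero]; exact zero_mem _
  | tmul g' y =>
    induction hv using Submodule.span_induction with
    | mem v hv =>
      rcases hv with ⟨g, -, x, hx, rfl⟩ | ⟨d, hd, x, hx, rfl⟩
      · exact lie_tmul_mem_lieFiltration_succ hG hH g hx g' y
      · exact lie_tmul_mem_lieFiltration_succ_of_mem_center hH hd hx g' y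
    | zero => rw [zero_lie]; exact zero_mem _
    | add _ _ _ _ h₁ h₂ => rw [add_lie]; exact add_mem h₁ h₂
    | smul a _ _ h => rw [smul_lie]; exact Submodule.smul_mem _ a h
  | add w₁ w₂ h₁ h₂ => rw [lie_add]; exact add_mem h₁ h₂

theorem lc_mem_lieFiltration (l : List (G ⊗[R] H)) {μ : ℕ} {v : G ⊗[R] H}
    (hv : v ∈ lieFiltration R G H μ) : lc v l ∈ lieFiltration R G H (μ + l.length) := by
  induction l generalizing μ v with
  | nil => exact hv
  | cons w l ih =>
    rw [List.length_cons, ← add_assoc, add_right_comm]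
    exact ih (lie_mem_lieFiltration_succ hG hH hv w)

end TensorProduct

/-- If every product of `n` commutators of pairs of elements of `H` vanishes, then
`G ⊗ H` is Lie nilpotent of class at most `2n`. -/
theorem statement_6 (F : Type*) [Field F]
    (G H : Type*) [Ring G] [Algebra F G] [Ring H] [Algebra F H]
    (hG : ∀ a b c : G, ⁅⁅a, b⁆, c⁆ = 0) (hH : ∀ a b c : H, ⁅⁅a, b⁆, c⁆ = 0)
    (n : ℕ)
    (hprod : ∀ f : ℕ → H,
      (List.ofFn fun i : Fin n => ⁅f (2 * i + 1), f (2 * i + 2)⁆).prod = 0)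
    (u : ℕ → G ⊗[F] H) :
    lcomm (List.ofFn fun i : Fin (2 * n + 1) => u (i + 1)) = 0 := by
  rw [List.ofFn_succ]
  have hu : u (0 + 1) ∈ lieFiltration F G H 0 := by
    rw [lieFiltration_zero]
    exact Submodule.mem_top
  have h := lc_mem_lieFiltration hG hH (List.ofFn fun i : Fin (2 * n) => u (i.succ + 1)) hu
  rwa [List.length_ofFn, zero_add, lieFiltration_two_mul_eq_bot hprod,
    Submodule.mem_bot] at h
end

section
/- Let E_r be the r-generated unital Grassmann algebra over a field F of characteristic ≠ 2 (the subalgebra of E generated by e_1, ..., e_r). Then for any f_1, ..., f_{r+2} ∈ E_r, the product of commutators [f_1, f_2][f_3, f_4]···[f_{r+1}, f_{r+2}] equals 0. -/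
open scoped TensorProduct

/-- The infinite-dimensional Grassmann (exterior) algebra over `F`, on a vector space with
basis `e₁, e₂, …` indexed by `ℕ`. -/
abbrev GrassmannAlg (F : Type*) [Field F] := ExteriorAlgebra F (ℕ →₀ F)

/-- The generators `eᵢ` of the Grassmann algebra. -/
noncomputable def grassGen (F : Type*) [Field F] (i : ℕ) : GrassmannAlg F :=
  ExteriorAlgebra.ι F (Finsupp.single i (1 : F))

/-- The `r`-generated unital Grassmann subalgebra `E_r`, generated by `e₁, …, e_r`. -/
noncomputable def GrassmannSub (F : Type*) [Field F] (r : ℕ) : Subalgebra F (GrassmannAlg F) :=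
  Algebra.adjoin F (grassGen F '' {i | 1 ≤ i ∧ i ≤ r})

/-!
Let `V` be the span of `e₁, …, e_r` and `A = E_r`. A generator anticommutes with odd elements and
commutes with even ones, so `a * eᵢ = eᵢ * ā` with `ā` the grade involution of `a`; hence
`A V ⊆ V A`, and `V² A` is an `A`-bimodule. Being a derivation in each argument, the commutator
maps `A × A` into any `A`-bimodule containing the commutators `eᵢeⱼ - eⱼeᵢ ∈ V²` of generators,
so every `[f, f']` lies in `V² A`. A product of `k` such commutators then lies in `V^{2k} A`, which
vanishes once `2k > r`: a product of more than `r` generators repeats one of them.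
-/

section OrderedMonoid

variable {α : Type*} [Monoid α] [Preorder α] [MulLeftMono α] [MulRightMono α] {a b : α}

theorem mul_pow_le_pow_mul_of_mul_le (h : b * a ≤ a * b) (n : ℕ) : b * a ^ n ≤ a ^ n * b := by
  induction n with
  | zero => simp
  | succ n ih =>
    calc b * a ^ (n + 1) = b * a ^ n * a := by rw [pow_succ, mul_assoc]
      _ ≤ a ^ n * b * a := mul_le_mul_left ih a
      _ = a ^ n * (b * a) := mul_assoc ..
      _ ≤ a ^ n * (a * b) := mul_le_mul_right h _
      _ = a ^ (n + 1) * b := by rw [pow_succ, mul_assoc]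

theorem mul_pow_le_pow_mul_of_mul_self_le (h : b * a ≤ a * b) (hb : b * b ≤ b) (hb₁ : 1 ≤ b)
    (n : ℕ) : (a * b) ^ n ≤ a ^ n * b := by
  induction n with
  | zero => simpa using hb₁
  | succ n ih =>
    calc (a * b) ^ (n + 1) = (a * b) ^ n * a * b := by rw [pow_succ, mul_assoc]
      _ ≤ a ^ n * b * a * b := mul_le_mul_left (mul_le_mul_left ih a) b
      _ = a ^ n * (b * a) * b := by rw [mul_assoc (a ^ n)]
      _ ≤ a ^ n * (a * b) * b := mul_le_mul_left (mul_le_mul_right h _) b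
      _ = a ^ (n + 1) * (b * b) := by rw [pow_succ]; simp only [mul_assoc]
      _ ≤ a ^ (n + 1) * b := mul_le_mul_right hb _

end OrderedMonoid

theorem Submodule.list_prod_mem_pow {R A : Type*} [CommSemiring R] [Semiring A] [Algebra R A]
    {N : Submodule R A} {l : List A} (h : ∀ x ∈ l, x ∈ N) : l.prod ∈ N ^ l.length := by
  induction l with
  | nil => rw [List.prod_nil, List.length_nil, pow_zero]; exact Submodule.one_le.1 le_rfl
  | cons x l ih =>
    rw [List.prod_cons, List.length_cons, pow_succ']
    exact Submodule.mul_mem_mul (h x List.mem_cons_self)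
      (ih fun y hy => h y (List.mem_cons_of_mem x hy))

section AdjoinCommutator

open Algebra

attribute [local instance] LieRing.ofAssociativeRing

variable {R A : Type*} [CommRing R] [Ring A] [Algebra R A] {X : Set A} {D : Submodule R A}

theorem lie_mem_of_forall_lie_mem
    (hAD : Subalgebra.toSubmodule (adjoin R X) * D ≤ D)
    (hDA : D * Subalgebra.toSubmodule (adjoin R X) ≤ D)
    {a : A} (hX : ∀ x ∈ X, ⁅a, x⁆ ∈ D) {b : A} (hb : b ∈ adjoin R X) :
    ⁅a, b⁆ ∈ D := by
  induction hb using Algebra.adjoin_induction with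
  | mem x hx => exact hX x hx
  | algebraMap c => simp [Ring.lie_def, Algebra.commutes]
  | add x y _ _ hx hy => rw [lie_add]; exact add_mem hx hy
  | mul x y hx hy hxD hyD =>
    have hleibniz : ⁅a, x * y⁆ = ⁅a, x⁆ * y + x * ⁅a, y⁆ := by
      simp only [Ring.lie_def]; noncomm_ring
    rw [hleibniz]
    exact add_mem (hDA (Submodule.mul_mem_mul hxD hy)) (hAD (Submodule.mul_mem_mul hx hyD))

theorem lie_mem_of_mem_adjoin
    (hAD : Subalgebra.toSubmodule (adjoin R X) * D ≤ D)
    (hDA : D * Subalgebra.toSubmodule (adjoin R X) ≤ D)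
    (hX : ∀ x ∈ X, ∀ y ∈ X, ⁅x, y⁆ ∈ D) {a b : A} (ha : a ∈ adjoin R X) (hb : b ∈ adjoin R X) :
    ⁅a, b⁆ ∈ D := by
  have hgen_left : ∀ x ∈ X, ∀ c ∈ adjoin R X, ⁅x, c⁆ ∈ D := fun x hx _ hc =>
    lie_mem_of_forall_lie_mem hAD hDA (hX x hx) hc
  refine lie_mem_of_forall_lie_mem hAD hDA (fun y hy => ?_) hb
  rw [← lie_skew]
  exact neg_mem (hgen_left y hy a ha)

end AdjoinCommutator

namespace ExteriorAlgebra

open Algebra Submodule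

variable {R M : Type*} [CommRing R] [AddCommGroup M] [Module R M]

theorem mul_ι (x : ExteriorAlgebra R M) (m : M) :
    x * ι R m = ι R m * CliffordAlgebra.involute x := by
  induction x using CliffordAlgebra.induction with
  | algebraMap c => rw [CliffordAlgebra.involute.commutes, Algebra.commutes]
  | ι v =>
    rw [CliffordAlgebra.involute_ι, mul_neg, eq_neg_iff_add_eq_zero]
    exact ι_add_mul_swap v m
  | mul x y hx hy => rw [mul_assoc, hy, ← mul_assoc, hx, map_mul, mul_assoc]
  | add x y hx hy => rw [add_mul, hx, hy, map_add, mul_add]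

variable (s : Set M)

theorem involute_mem_adjoin_ι {x : ExteriorAlgebra R M} (hx : x ∈ adjoin R (ι R '' s)) :
    CliffordAlgebra.involute x ∈ adjoin R (ι R '' s) := by
  have hmap : (adjoin R (ι R '' s)).map CliffordAlgebra.involute ≤ adjoin R (ι R '' s) := by
    rw [AlgHom.map_adjoin, adjoin_le_iff]
    rintro _ ⟨_, ⟨m, hm, rfl⟩, rfl⟩
    rw [CliffordAlgebra.involute_ι]
    exact neg_mem (subset_adjoin ⟨m, hm, rfl⟩)
  exact hmap ⟨x, hx, rfl⟩

theorem adjoin_ι_mul_span_ι_le :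
    Subalgebra.toSubmodule (adjoin R (ι R '' s)) * span R (ι R '' s) ≤
      span R (ι R '' s) * Subalgebra.toSubmodule (adjoin R (ι R '' s)) := by
  refine mul_le.2 fun a ha v hv => ?_
  have hspan : span R (ι R '' s) ≤
      (span R (ι R '' s) * Subalgebra.toSubmodule (adjoin R (ι R '' s))).comap
        (LinearMap.mulLeft R a) := by
    rw [span_le]
    rintro _ ⟨m, hm, rfl⟩
    rw [SetLike.mem_coe, mem_comap, LinearMap.mulLeft_apply, mul_ι]
    exact mul_mem_mul (subset_span ⟨m, hm, rfl⟩) (involute_mem_adjoin_ι s ha)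
  exact hspan hv

theorem lie_mem_span_ι_sq_mul_adjoin_ι {a b : ExteriorAlgebra R M}
    (ha : a ∈ adjoin R (ι R '' s)) (hb : b ∈ adjoin R (ι R '' s)) :
    ⁅a, b⁆ ∈ span R (ι R '' s) ^ 2 * Subalgebra.toSubmodule (adjoin R (ι R '' s)) := by
  set V := span R (ι R '' s)
  set Q := Subalgebra.toSubmodule (adjoin R (ι R '' s))
  have hQQ : Q * Q = Q := Subalgebra.isIdempotentElem_toSubmodule _
  have hQ₁ : 1 ≤ Q := one_le.2 (one_mem (adjoin R (ι R '' s)))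
  refine lie_mem_of_mem_adjoin (D := V ^ 2 * Q) ?_ ?_ ?_ ha hb
  · calc Q * (V ^ 2 * Q) = Q * V ^ 2 * Q := (mul_assoc ..).symm
      _ ≤ V ^ 2 * Q * Q :=
        mul_le_mul_left (mul_pow_le_pow_mul_of_mul_le (adjoin_ι_mul_span_ι_le s) 2) Q
      _ = V ^ 2 * Q := by rw [mul_assoc, hQQ]
  · rw [mul_assoc, hQQ]
  · rintro _ ⟨m, hm, rfl⟩ _ ⟨n, hn, rfl⟩
    have hι : ∀ {m n}, m ∈ s → n ∈ s → ι R m * ι R n ∈ V ^ 2 := fun hm hn => by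
      rw [pow_two]; exact mul_mem_mul (subset_span ⟨_, hm, rfl⟩) (subset_span ⟨_, hn, rfl⟩)
    exact le_mul_of_one_le_right' hQ₁ (sub_mem (hι hm hn) (hι hn hm))

theorem span_ι_pow_eq_bot {s : Set M} (hs : s.Finite) {n : ℕ} (hn : s.ncard < n) :
    span R (ι R '' s) ^ n = ⊥ := by
  rw [span_pow, eq_bot_iff, span_le]
  intro x hx
  obtain ⟨g, rfl⟩ := Set.mem_pow.1 hx
  choose m hm hgm using fun i => (g i).2
  have hprod : (List.ofFn fun i => (g i : ExteriorAlgebra R M)).prod = ιMulti R n m := by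
    simp only [ιMulti_apply, hgm]
  have hnotinj : ¬ Function.Injective fun i => (⟨m i, hm i⟩ : s) := fun hinj => by
    have := hs.to_subtype
    have := Nat.card_le_card_of_injective _ hinj
    rw [Nat.card_eq_fintype_card, Fintype.card_fin, Nat.card_coe_set_eq] at this
    omega
  obtain ⟨i, j, hij, hne⟩ := Function.not_injective_iff.1 hnotinj
  rw [SetLike.mem_coe, hprod, (ιMulti R n).map_eq_zero_of_eq m (congrArg Subtype.val hij) hne]
  exact zero_mem _

theorem list_prod_eq_zero_of_forall_mem_lie {s : Set M} (hs : s.Finite)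
    {l : List (ExteriorAlgebra R M)}
    (hl : ∀ x ∈ l, ∃ a ∈ adjoin R (ι R '' s), ∃ b ∈ adjoin R (ι R '' s), x = ⁅a, b⁆)
    (hlen : s.ncard < 2 * l.length) :
    l.prod = 0 := by
  set V := span R (ι R '' s)
  set Q := Subalgebra.toSubmodule (adjoin R (ι R '' s))
  have hprod : l.prod ∈ (V ^ 2 * Q) ^ l.length := list_prod_mem_pow fun x hx => by
    obtain ⟨a, ha, b, hb, rfl⟩ := hl x hx
    exact lie_mem_span_ι_sq_mul_adjoin_ι s ha hb
  have hbot : (V ^ 2 * Q) ^ l.length = ⊥ := by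
    refine eq_bot_iff.2 ?_
    calc (V ^ 2 * Q) ^ l.length
        ≤ (V ^ 2) ^ l.length * Q :=
          mul_pow_le_pow_mul_of_mul_self_le
            (mul_pow_le_pow_mul_of_mul_le (adjoin_ι_mul_span_ι_le s) 2)
            (Subalgebra.isIdempotentElem_toSubmodule _).le
            (one_le.2 (one_mem (adjoin R (ι R '' s)))) _
      _ = ⊥ := by rw [← pow_mul, span_ι_pow_eq_bot hs hlen, bot_mul]
  rwa [hbot, mem_bot] at hprod

end ExteriorAlgebra

theorem statement_9_general (F : Type*) [Field F]
    (r : ℕ) (f : ℕ → GrassmannAlg F)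
    (hf : ∀ i, 1 ≤ i → i ≤ r + 2 → f i ∈ GrassmannSub F r) :
    (List.ofFn fun i : Fin ((r + 2) / 2) => ⁅f (2 * i + 1), f (2 * i + 2)⁆).prod = 0 := by
  set s : Set (ℕ →₀ F) := (Finsupp.single · 1) '' Set.Icc 1 r
  have hs : s.Finite := (Set.finite_Icc 1 r).image _
  have hcard : s.ncard ≤ r := (Set.ncard_image_le (Set.finite_Icc 1 r)).trans (by simp)
  have hsub : GrassmannSub F r = Algebra.adjoin F (ExteriorAlgebra.ι F '' s) := by
    rw [GrassmannSub, Set.image_image]; rfl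
  refine ExteriorAlgebra.list_prod_eq_zero_of_forall_mem_lie hs (fun x hx => ?_)
    (by rw [List.length_ofFn]; omega)
  obtain ⟨i, rfl⟩ := List.mem_ofFn.1 hx
  rw [← hsub]
  exact ⟨_, hf _ (by omega) (by omega), _, hf _ (by omega) (by omega), rfl⟩

/-- In `E_r` (with `r` even), any product of commutators
`[f₁,f₂][f₃,f₄]⋯[f_{r+1},f_{r+2}]` vanishes. -/
theorem statement_9 (F : Type*) [Field F] (hF : ringChar F ≠ 2)
    (r : ℕ) (hr : Even r) (f : ℕ → GrassmannAlg F)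
    (hf : ∀ i, 1 ≤ i → i ≤ r + 2 → f i ∈ GrassmannSub F r) :
    (List.ofFn fun i : Fin ((r + 2) / 2) => ⁅f (2 * i + 1), f (2 * i + 2)⁆).prod = 0 :=
  statement_9_general F r f hf
end

section
/- Let F be a field of characteristic 2, 𝒢 the group ⟨y_1, y_2, ... | y_i² = 1, ((y_i,y_j), y_k) = 1⟩, and F𝒢 its group algebra. Let d_{ij} = (y_i, y_j) + 1 ∈ F𝒢 and let I be the two-sided ideal of F𝒢 generated by all elements d_{i_1 i_2} d_{i_3 i_4} + d_{i_1 i_3} d_{i_2 i_4}. Then for all u_1, u_2, u_3 ∈ F𝒢, the triple commutator [u_1, u_2, u_3] lies in I; i.e., the quotient F𝒢/I satisfies the identity [x_1, x_2, x_3] = 0. -/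
/-!
Commutators in `𝒢` are central, bimultiplicative and of order two, so `χ(g, h) = (g, h)`, read in
the centre of `F𝒢` modulo `I`, is a symmetric bicharacter, and in characteristic two
`d_{ij} = χ(yᵢ, yⱼ) - 1`. For group elements `[[g, h], k] = khg · (χ(hg, k) - 1)(χ(g, h) - 1)`,
and `χ(hg, k) - 1 = χ(g, k)(χ(h, k) - 1) + (χ(g, k) - 1)`, so by trilinearity it suffices that
`(χ(a, b) - 1)(χ(a, c) - 1) ∈ I` for all `a, b, c`. For generators `a, b, c` this is a defining
relation of `I` (take `i₃ = i₁`). Writing `δ = χ - 1`, the identity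
`δ(rs, t) = δ(r, t) + δ(s, t) + δ(r, t)δ(s, t)` extends it to arbitrary `b, c`, then extends the
relations of `I` in their last slot, and finally extends the claim to arbitrary `a` by induction on
the length of `a` as a word in the generators.
-/

open scoped TensorProduct

/-- The group commutator `(a, b) = a⁻¹ b⁻¹ a b`. -/
def gc {G : Type*} [Group G] (a b : G) : G := a⁻¹ * b⁻¹ * a * b

/-- Relations for the group `𝒢 = ⟨y₁, y₂, … ∣ yᵢ² = 1, ((yᵢ, yⱼ), yₖ) = 1⟩`. -/
def grassRels : Set (FreeGroup ℕ) :=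
  (Set.range fun i => FreeGroup.of i * FreeGroup.of i) ∪
  {x | ∃ i j k : ℕ, x = gc (gc (FreeGroup.of i) (FreeGroup.of j)) (FreeGroup.of k)}

/-- The group `𝒢 = ⟨y₁, y₂, … ∣ yᵢ² = 1, ((yᵢ, yⱼ), yₖ) = 1⟩`. -/
abbrev GroupG := PresentedGroup grassRels

/-- The generators `yᵢ` of `𝒢`. -/
def yG (i : ℕ) : GroupG := PresentedGroup.of i

/-- `d_{ij} = (yᵢ, yⱼ) + 1` in the group algebra `F𝒢`. -/
noncomputable def dElt (F : Type*) [Field F] (i j : ℕ) : MonoidAlgebra F GroupG :=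
  MonoidAlgebra.of F GroupG (gc (yG i) (yG j)) + 1

/-- The two-sided ideal `I` of `F𝒢` generated by all `d_{i₁i₂}d_{i₃i₄} + d_{i₁i₃}d_{i₂i₄}`. -/
noncomputable def Iideal (F : Type*) [Field F] : TwoSidedIdeal (MonoidAlgebra F GroupG) :=
  TwoSidedIdeal.span
    {x | ∃ i₁ i₂ i₃ i₄ : ℕ, x = dElt F i₁ i₂ * dElt F i₃ i₄ + dElt F i₁ i₃ * dElt F i₂ i₄}

namespace MonoidHom

variable {M R : Type*} [Monoid M] [CommRing R] {S : Set M} (χ : M →* M →* R)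

theorem sub_one_mul_eq_zero_of_closure_eq_top (hS : Submonoid.closure S = ⊤) {a : M} {x : R}
    (h : ∀ s ∈ S, (χ a s - 1) * x = 0) (b : M) : (χ a b - 1) * x = 0 := by
  induction b using Submonoid.induction_of_closure_eq_top_left hS with
  | one => simp
  | mul_left s hs b ih => rw [map_mul]; linear_combination χ a b * h s hs + ih

theorem sub_one_mul_sub_one_eq_zero_of_closure_eq_top (hS : Submonoid.closure S = ⊤) {a : M}
    (h : ∀ s ∈ S, ∀ t ∈ S, (χ a s - 1) * (χ a t - 1) = 0) (b c : M) :
    (χ a b - 1) * (χ a c - 1) = 0 := by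
  refine χ.sub_one_mul_eq_zero_of_closure_eq_top hS (fun s hs => ?_) b
  rw [mul_comm]
  exact χ.sub_one_mul_eq_zero_of_closure_eq_top hS (fun t ht => h t ht s hs) c

theorem exchange_of_closure_eq_top (hS : Submonoid.closure S = ⊤)
    (hsq : ∀ s ∈ S, ∀ b c, (χ s b - 1) * (χ s c - 1) = 0)
    (hrel : ∀ s₁ ∈ S, ∀ s₂ ∈ S, ∀ s₃ ∈ S, ∀ s₄ ∈ S,
      (χ s₁ s₂ - 1) * (χ s₃ s₄ - 1) + (χ s₁ s₃ - 1) * (χ s₂ s₄ - 1) = 0)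
    {s₁ s₂ s₃ : M} (h₁ : s₁ ∈ S) (h₂ : s₂ ∈ S) (h₃ : s₃ ∈ S) (d : M) :
    (χ s₁ s₂ - 1) * (χ s₃ d - 1) + (χ s₁ s₃ - 1) * (χ s₂ d - 1) = 0 := by
  induction d using Submonoid.induction_of_closure_eq_top_left hS with
  | one => simp
  | mul_left t ht d ih =>
    rw [map_mul, map_mul]
    linear_combination hrel s₁ h₁ s₂ h₂ s₃ h₃ t ht + ih + (χ s₁ s₂ - 1) * hsq s₃ h₃ t d +
      (χ s₁ s₃ - 1) * hsq s₂ h₂ t d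

theorem sub_one_mul_sub_one_eq_zero (hS : Submonoid.closure S = ⊤) (hχ : ∀ a b, χ a b = χ b a)
    (hself : ∀ s ∈ S, χ s s = 1)
    (hrel : ∀ s₁ ∈ S, ∀ s₂ ∈ S, ∀ s₃ ∈ S, ∀ s₄ ∈ S,
      (χ s₁ s₂ - 1) * (χ s₃ s₄ - 1) + (χ s₁ s₃ - 1) * (χ s₂ s₄ - 1) = 0)
    (a b c : M) : (χ a b - 1) * (χ a c - 1) = 0 := by
  have hsq (s) (hs : s ∈ S) : ∀ b c, (χ s b - 1) * (χ s c - 1) = 0 :=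
    χ.sub_one_mul_sub_one_eq_zero_of_closure_eq_top hS fun t ht u hu => by
      linear_combination hrel s hs t ht s hs u hu - (χ t u - 1) * hself s hs
  refine χ.sub_one_mul_sub_one_eq_zero_of_closure_eq_top hS (fun s hs t ht => ?_) b c
  induction a using Submonoid.induction_of_closure_eq_top_left hS with
  | one => simp
  | mul_left r hr a ih =>
    simp only [map_mul, mul_apply]
    linear_combination χ a s * χ a t * hsq r hr s t + (χ r s + χ r t - 1) * ih +
      χ.exchange_of_closure_eq_top hS hsq hrel hr hs ht a - (χ r s - 1) * hχ t a -
      (χ r t - 1) * hχ s a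

end MonoidHom

section CentralCommutators

variable {G : Type*} [Group G]

theorem gc_mul_left (a b c : G) : gc (a * b) c = b⁻¹ * gc a c * b * gc b c := by
  simp only [gc]; group

theorem gc_mul_right (a b c : G) : gc a (b * c) = gc a c * (c⁻¹ * gc a b * c) := by
  simp only [gc]; group

theorem gc_eq_one_iff (a b : G) : gc a b = 1 ↔ a * b = b * a := by
  rw [gc, mul_assoc, mul_assoc, ← mul_assoc a⁻¹, ← mul_inv_rev, inv_mul_eq_one, eq_comm]

theorem gc_swap (a b : G) : gc b a = (gc a b)⁻¹ := by
  simp only [gc]; group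

theorem inv_mul_mul_eq_of_mem_center {z : G} (hz : z ∈ Subgroup.center G) (g : G) :
    g⁻¹ * z * g = z := by
  rw [mul_assoc, ← Subgroup.mem_center_iff.mp hz g, inv_mul_cancel_left]

theorem gc_mem_center_of_closure_eq_top {S : Set G} (hS : Submonoid.closure S = ⊤)
    (h : ∀ s ∈ S, ∀ t ∈ S, gc s t ∈ Subgroup.center G) (a b : G) :
    gc a b ∈ Subgroup.center G := by
  have hgen (s) (hs : s ∈ S) (b : G) : gc s b ∈ Subgroup.center G := by
    induction b using Submonoid.induction_of_closure_eq_top_right hS with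
    | one => simp [gc]
    | mul_right b t ht ih =>
      rw [gc_mul_right, inv_mul_mul_eq_of_mem_center ih]
      exact mul_mem (h s hs t ht) ih
  induction a using Submonoid.induction_of_closure_eq_top_left hS with
  | one => simp [gc]
  | mul_left s hs a ih =>
    rw [gc_mul_left, inv_mul_mul_eq_of_mem_center (hgen s hs b)]
    exact mul_mem (hgen s hs b) ih

theorem gc_mul_left_of_mem_center (hZ : ∀ a b : G, gc a b ∈ Subgroup.center G) (a b c : G) :
    gc (a * b) c = gc a c * gc b c := by
  rw [gc_mul_left, inv_mul_mul_eq_of_mem_center (hZ a c)]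

theorem gc_mul_right_of_mem_center (hZ : ∀ a b : G, gc a b ∈ Subgroup.center G) (a b c : G) :
    gc a (b * c) = gc a b * gc a c := by
  rw [gc_mul_right, inv_mul_mul_eq_of_mem_center (hZ a b), Subgroup.mem_center_iff.mp (hZ a b)]

theorem gc_mul_self_of_closure_eq_top {S : Set G} (hS : Submonoid.closure S = ⊤)
    (hsq : ∀ s ∈ S, s * s = 1) (hZ : ∀ a b : G, gc a b ∈ Subgroup.center G) (a b : G) :
    gc a b * gc a b = 1 := by
  induction a using Submonoid.induction_of_closure_eq_top_left hS with
  | one => simp [gc]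
  | mul_left s hs a ih =>
    have hcomm : Commute (gc a b) (gc s b) := Subgroup.mem_center_iff.mp (hZ s b) _
    rw [gc_mul_left_of_mem_center hZ, hcomm.mul_mul_mul_comm, ih, mul_one,
      ← gc_mul_left_of_mem_center hZ, hsq s hs]
    simp [gc]

end CentralCommutators

namespace GroupG

theorem mk_eq_one_of_mem_grassRels {r : FreeGroup ℕ} (h : r ∈ grassRels) :
    PresentedGroup.mk grassRels r = 1 :=
  (QuotientGroup.eq_one_iff _).mpr (Subgroup.subset_normalClosure h)

theorem yG_mul_self (i : ℕ) : yG i * yG i = 1 :=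
  mk_eq_one_of_mem_grassRels (Or.inl ⟨i, rfl⟩)

theorem gc_gc_yG (i j k : ℕ) : gc (gc (yG i) (yG j)) (yG k) = 1 := by
  have h := mk_eq_one_of_mem_grassRels (Or.inr ⟨i, j, k, rfl⟩)
  simp only [gc, map_mul, map_inv] at h ⊢
  exact h

theorem closure_range_yG : Subgroup.closure (Set.range yG) = ⊤ :=
  PresentedGroup.closure_range_of _

theorem mclosure_range_yG : Submonoid.closure (Set.range yG) = ⊤ := by
  have h := Subgroup.closure_toSubmonoid (Set.range yG)
  simp only [Set.inv_range, inv_eq_of_mul_eq_one_right (yG_mul_self _), Set.union_self] at h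
  rw [← h, closure_range_yG, Subgroup.top_toSubmonoid]

theorem gc_mem_center (a b : GroupG) : gc a b ∈ Subgroup.center GroupG := by
  refine gc_mem_center_of_closure_eq_top mclosure_range_yG ?_ a b
  rintro _ ⟨i, rfl⟩ _ ⟨j, rfl⟩
  rw [← Subgroup.centralizer_univ, ← Subgroup.coe_top, ← closure_range_yG,
    Subgroup.centralizer_closure, Subgroup.mem_centralizer_iff]
  rintro _ ⟨k, rfl⟩
  exact ((gc_eq_one_iff _ _).mp (gc_gc_yG i j k)).symm

theorem gc_comm (a b : GroupG) : gc b a = gc a b := by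
  rw [gc_swap, inv_eq_of_mul_eq_one_right
    (gc_mul_self_of_closure_eq_top mclosure_range_yG (by rintro _ ⟨i, rfl⟩; exact yG_mul_self i)
      gc_mem_center a b)]

end GroupG

section GroupAlgebra

variable {k G : Type*} [CommRing k] [Group G]

theorem MonoidAlgebra.of_mem_center {g : G} (hg : g ∈ Subgroup.center G) :
    MonoidAlgebra.of k G g ∈ Subring.center (MonoidAlgebra k G) :=
  Subring.mem_center_iff.mpr fun u =>
    (MonoidAlgebra.of_commute (fun m => (Subgroup.mem_center_iff.mp hg m).symm) u).eq.symm

variable (k)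

noncomputable def commutatorChar (hZ : ∀ a b : G, gc a b ∈ Subgroup.center G) :
    G →* G →* Subring.center (MonoidAlgebra k G) where
  toFun a :=
    { toFun b := ⟨MonoidAlgebra.of k G (gc a b), MonoidAlgebra.of_mem_center (hZ a b)⟩
      map_one' := Subtype.ext (by simp [gc, MonoidAlgebra.one_def])
      map_mul' b c := Subtype.ext (by simp [gc_mul_right_of_mem_center hZ]) }
  map_one' := MonoidHom.ext fun b => Subtype.ext (by simp [gc, MonoidAlgebra.one_def])
  map_mul' a b := MonoidHom.ext fun c => Subtype.ext (by simp [gc_mul_left_of_mem_center hZ])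

variable {k}

@[simp]
theorem coe_commutatorChar (hZ : ∀ a b : G, gc a b ∈ Subgroup.center G) (a b : G) :
    (commutatorChar k hZ a b : MonoidAlgebra k G) = MonoidAlgebra.of k G (gc a b) :=
  rfl

theorem lie_mul_of_commute {A : Type*} [Ring A] {x y z : A} (h : Commute z y) :
    ⁅x * z, y⁆ = ⁅x, y⁆ * z := by
  simp only [Ring.lie_def, sub_mul, mul_assoc, h.eq]

theorem MonoidAlgebra.lie_of_of (g h : G) :
    ⁅of k G g, of k G h⁆ = of k G (h * g) * (of k G (gc g h) - 1) := by
  rw [Ring.lie_def, mul_sub, mul_one, ← map_mul, ← map_mul, ← map_mul]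
  congr 2
  simp only [gc]; group

theorem MonoidAlgebra.lie_lie_of_of_of {g h : G} (hgh : gc g h ∈ Subgroup.center G) (l : G) :
    ⁅⁅of k G g, of k G h⁆, of k G l⁆ =
      of k G (l * (h * g)) * ((of k G (gc (h * g) l) - 1) * (of k G (gc g h) - 1)) := by
  have hcomm : Commute (of k G (gc g h) - 1) (of k G l) :=
    ((MonoidAlgebra.of_commute (fun m => (Subgroup.mem_center_iff.mp hgh m).symm) _).sub_left
      (Commute.one_left _))
  rw [lie_of_of, lie_mul_of_commute hcomm, lie_of_of, mul_assoc]

end GroupAlgebra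

section

attribute [local instance] LieRing.ofAssociativeRing

theorem MonoidAlgebra.lie_lie_mem_of_forall_of {k G : Type*} [CommRing k] [Monoid G]
    {I : TwoSidedIdeal (MonoidAlgebra k G)}
    (h : ∀ g₁ g₂ g₃, ⁅⁅of k G g₁, of k G g₂⁆, of k G g₃⁆ ∈ I) (u₁ u₂ u₃ : MonoidAlgebra k G) :
    ⁅⁅u₁, u₂⁆, u₃⁆ ∈ I := by
  have smul_mem (r : k) {x} (hx : x ∈ I) : r • x ∈ I := by
    rw [Algebra.smul_def]; exact I.mul_mem_left _ _ hx
  induction u₁ using MonoidAlgebra.induction_on with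
  | add _ _ h₁ h₂ => rw [add_lie, add_lie]; exact I.add_mem h₁ h₂
  | smul r _ h₁ => rw [smul_lie, smul_lie]; exact smul_mem r h₁
  | of g₁ =>
    induction u₂ using MonoidAlgebra.induction_on with
    | add _ _ h₁ h₂ => rw [lie_add, add_lie]; exact I.add_mem h₁ h₂
    | smul r _ h₁ => rw [lie_smul, smul_lie]; exact smul_mem r h₁
    | of g₂ =>
      induction u₃ using MonoidAlgebra.induction_on with
      | add _ _ h₁ h₂ => rw [lie_add]; exact I.add_mem h₁ h₂
      | smul r _ h₁ => rw [lie_smul]; exact smul_mem r h₁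
      | of g₃ => exact h g₁ g₂ g₃

end

section QuotientByI

variable (F : Type*) [Field F]

noncomputable def centerIdeal : Ideal (Subring.center (MonoidAlgebra F GroupG)) :=
  (Iideal F).asIdeal.comap (Subring.center _).subtype

noncomputable def commutatorCharMod :
    GroupG →* GroupG →* Subring.center (MonoidAlgebra F GroupG) ⧸ centerIdeal F :=
  (commutatorChar F GroupG.gc_mem_center).compr₂ (Ideal.Quotient.mk _).toMonoidHom

theorem commutatorCharMod_apply (a b : GroupG) :
    commutatorCharMod F a b =
      Ideal.Quotient.mk (centerIdeal F) (commutatorChar F GroupG.gc_mem_center a b) :=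
  rfl

theorem commutatorCharMod_comm (a b : GroupG) :
    commutatorCharMod F a b = commutatorCharMod F b a := by
  rw [commutatorCharMod_apply, commutatorCharMod_apply]
  congr 1
  exact Subtype.ext (by simp [GroupG.gc_comm a b])

theorem commutatorCharMod_self (a : GroupG) : commutatorCharMod F a a = 1 := by
  rw [commutatorCharMod_apply, ← map_one (Ideal.Quotient.mk _)]
  congr 1
  exact Subtype.ext (by simp [gc, MonoidAlgebra.one_def])

theorem mk_centerIdeal_eq_zero_iff (z : Subring.center (MonoidAlgebra F GroupG)) :
    Ideal.Quotient.mk (centerIdeal F) z = 0 ↔ (z : MonoidAlgebra F GroupG) ∈ Iideal F := by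
  rw [Ideal.Quotient.eq_zero_iff_mem, centerIdeal, Ideal.mem_comap, TwoSidedIdeal.mem_asIdeal]
  rfl

theorem commutatorCharMod_relation [CharP F 2] :
    ∀ s₁ ∈ Set.range yG, ∀ s₂ ∈ Set.range yG, ∀ s₃ ∈ Set.range yG, ∀ s₄ ∈ Set.range yG,
      (commutatorCharMod F s₁ s₂ - 1) * (commutatorCharMod F s₃ s₄ - 1) +
        (commutatorCharMod F s₁ s₃ - 1) * (commutatorCharMod F s₂ s₄ - 1) = 0 := by
  rintro _ ⟨i₁, rfl⟩ _ ⟨i₂, rfl⟩ _ ⟨i₃, rfl⟩ _ ⟨i₄, rfl⟩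
  have : CharP (MonoidAlgebra F GroupG) 2 := charP_of_injective_algebraMap' F 2
  have hd (i j : ℕ) : MonoidAlgebra.of F GroupG (gc (yG i) (yG j)) - 1 = dElt F i j :=
    CharTwo.sub_eq_add _ _
  simp only [commutatorCharMod_apply, ← map_one (Ideal.Quotient.mk (centerIdeal F)), ← map_sub,
    ← map_mul, ← map_add, mk_centerIdeal_eq_zero_iff]
  push_cast [coe_commutatorChar, hd]
  exact TwoSidedIdeal.subset_span ⟨i₁, i₂, i₃, i₄, rfl⟩

theorem of_gc_sub_one_mul_of_gc_sub_one_mem [CharP F 2] (g h l : GroupG) :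
    (MonoidAlgebra.of F GroupG (gc (h * g) l) - 1) * (MonoidAlgebra.of F GroupG (gc g h) - 1) ∈
      Iideal F := by
  set χ := commutatorCharMod F
  have hsq := χ.sub_one_mul_sub_one_eq_zero GroupG.mclosure_range_yG (commutatorCharMod_comm F)
    (fun s _ => commutatorCharMod_self F s) (commutatorCharMod_relation F)
  have h0 : (χ (h * g) l - 1) * (χ g h - 1) = 0 := by
    rw [map_mul, MonoidHom.mul_apply]
    linear_combination χ g l * hsq h l g + hsq g l h +
      χ g l * (χ h l - 1) * commutatorCharMod_comm F g h
  simp only [χ, commutatorCharMod_apply, ← map_one (Ideal.Quotient.mk (centerIdeal F)), ← map_sub,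
    ← map_mul, mk_centerIdeal_eq_zero_iff] at h0
  push_cast [coe_commutatorChar] at h0
  exact h0

end QuotientByI

/-- Every triple ring commutator in `F𝒢` (char `F` = 2) lies in `I`. -/
theorem statement_14 (F : Type*) [Field F] [CharP F 2]
    (u₁ u₂ u₃ : MonoidAlgebra F GroupG) :
    ⁅⁅u₁, u₂⁆, u₃⁆ ∈ Iideal F := by
  refine MonoidAlgebra.lie_lie_mem_of_forall_of (fun g h l => ?_) u₁ u₂ u₃
  rw [MonoidAlgebra.lie_lie_of_of_of (GroupG.gc_mem_center g h)]
  exact (Iideal F).mul_mem_left _ _ (of_gc_sub_one_mul_of_gc_sub_one_mem F g h l)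
end

section
/- For any associative algebra A over any unital commutative ring R, T^(3)(A) · T^(3)(A) ⊆ T^(5)(A). -/
/-!
Pass to the quotient `B = A ⧸ T⁽⁵⁾(A)`, a ring in which every left-normed commutator of
length 5 vanishes. There, 4-commutators are central, and Leibniz expansions of vanishing
5-commutators show that `X(a,b,c;d,e,f) = [a,b,c] [d,e,f]` is antisymmetric under `a ↔ b`,
`d ↔ e`, `c ↔ d`, `a ↔ f`, and invariant under swapping the two factors. Three instances of
the Jacobi identity, related through these symmetries, then force `X = 0`. Finally
`g t g' = t (g g') + [g, t] g'`, where `[g, t]` is again a 3-commutator, reduces products of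
elements of `T⁽³⁾` to products `g g'` of 3-commutators.
-/

open scoped TensorProduct

attribute [local instance] LieRing.ofAssociativeRing

def IsLieNilpotentOfClass (B : Type*) [Ring B] (c : ℕ) : Prop :=
  ∀ l : List B, l.length = c + 1 → lcomm l = 0

lemma lie_lie_add_lie_lie_add_lie_lie {B : Type*} [Ring B] (a b c : B) :
    ⁅⁅a, b⁆, c⁆ + ⁅⁅b, c⁆, a⁆ + ⁅⁅c, a⁆, b⁆ = 0 := by
  simp only [Ring.lie_def]
  noncomm_ring

namespace IsLieNilpotentOfClass

variable {B : Type*} [Ring B]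

lemma lie_five_eq_zero (h : IsLieNilpotentOfClass B 4) (a b c d e : B) :
    ⁅⁅⁅⁅a, b⁆, c⁆, d⁆, e⁆ = 0 :=
  h [a, b, c, d, e] rfl

lemma commute_lie_four (h : IsLieNilpotentOfClass B 4) (a b c d x : B) :
    Commute ⁅⁅⁅a, b⁆, c⁆, d⁆ x :=
  sub_eq_zero.mp ((Ring.lie_def _ _).symm.trans (h.lie_five_eq_zero a b c d x))

lemma lie_four_mul_lie_swap (h : IsLieNilpotentOfClass B 4) (a b c d e f : B) :
    ⁅⁅⁅a, b⁆, c⁆, d⁆ * ⁅e, f⁆ = -(⁅⁅⁅a, b⁆, c⁆, e⁆ * ⁅d, f⁆) := by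
  set u := ⁅⁅a, b⁆, c⁆
  have expand : ⁅⁅u, d * e⁆, f⁆ =
      ⁅u, d⁆ * ⁅e, f⁆ + ⁅⁅u, d⁆, f⁆ * e + d * ⁅⁅u, e⁆, f⁆ + ⁅d, f⁆ * ⁅u, e⁆ := by
    simp only [Ring.lie_def]
    noncomm_ring
  rw [h.lie_five_eq_zero, h.lie_five_eq_zero, h.lie_five_eq_zero, zero_mul, mul_zero,
    add_zero, add_zero, ← (h.commute_lie_four a b c e _).eq] at expand
  exact eq_neg_of_add_eq_zero_left expand.symm

lemma lie_lie_mul_lie_lie_eq_lie_lie_mul (h : IsLieNilpotentOfClass B 4) (a b c d e f : B) :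
    ⁅⁅a, b⁆, c⁆ * ⁅⁅d, e⁆, f⁆ = ⁅⁅⁅⁅a, b⁆, c⁆ * d, e⁆, f⁆ := by
  set u := ⁅⁅a, b⁆, c⁆
  have expand : ⁅⁅u * d, e⁆, f⁆ =
      u * ⁅⁅d, e⁆, f⁆ + (⁅u, f⁆ * ⁅d, e⁆ + ⁅u, e⁆ * ⁅d, f⁆) + ⁅⁅u, e⁆, f⁆ * d := by
    simp only [Ring.lie_def]
    noncomm_ring
  have cancel : ⁅u, f⁆ * ⁅d, e⁆ + ⁅u, e⁆ * ⁅d, f⁆ = 0 := by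
    rw [h.lie_four_mul_lie_swap a b c f d e, h.lie_four_mul_lie_swap a b c e d f,
      ← lie_skew e f, mul_neg, neg_neg, neg_add_cancel]
  rw [expand, cancel, h.lie_five_eq_zero, zero_mul, add_zero, add_zero]

lemma lie_lie_mul_lie_lie_swap_inner (h : IsLieNilpotentOfClass B 4) (a b c d e f : B) :
    ⁅⁅a, b⁆, c⁆ * ⁅⁅d, e⁆, f⁆ = -(⁅⁅a, b⁆, d⁆ * ⁅⁅c, e⁆, f⁆) := by
  rw [h.lie_lie_mul_lie_lie_eq_lie_lie_mul, h.lie_lie_mul_lie_lie_eq_lie_lie_mul,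
    eq_neg_iff_add_eq_zero]
  have expand : ⁅⁅⁅⁅a, b⁆, c⁆ * d, e⁆, f⁆ + ⁅⁅⁅⁅a, b⁆, d⁆ * c, e⁆, f⁆ =
      ⁅⁅⁅⁅a, b⁆, c * d⁆, e⁆, f⁆ + ⁅⁅⁅⁅⁅a, b⁆, d⁆, c⁆, e⁆, f⁆ := by
    simp only [Ring.lie_def]
    noncomm_ring
  rw [expand, h.lie_five_eq_zero, h.lie_five_eq_zero, add_zero]

lemma commute_lie_lie (h : IsLieNilpotentOfClass B 4) (a b c d e f : B) :
    Commute ⁅⁅a, b⁆, c⁆ ⁅⁅d, e⁆, f⁆ := by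
  set u := ⁅⁅a, b⁆, c⁆
  have expand : ⁅u, ⁅⁅d, e⁆, f⁆⁆ =
      ⁅⁅⁅u, d⁆, e⁆, f⁆ - ⁅⁅⁅u, e⁆, d⁆, f⁆ - (⁅⁅⁅u, f⁆, d⁆, e⁆ - ⁅⁅⁅u, f⁆, e⁆, d⁆) := by
    simp only [Ring.lie_def]
    noncomm_ring
  rw [h.lie_five_eq_zero, h.lie_five_eq_zero, h.lie_five_eq_zero, h.lie_five_eq_zero] at expand
  simp only [sub_self] at expand
  exact sub_eq_zero.mp ((Ring.lie_def _ _).symm.trans expand)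

lemma lie_lie_mul_lie_lie_swap_outer (h : IsLieNilpotentOfClass B 4) (a b c d e f : B) :
    ⁅⁅a, b⁆, c⁆ * ⁅⁅d, e⁆, f⁆ = -(⁅⁅f, b⁆, c⁆ * ⁅⁅d, e⁆, a⁆) := by
  rw [(h.commute_lie_lie a b c d e f).eq, h.lie_lie_mul_lie_lie_swap_inner,
    (h.commute_lie_lie d e a f b c).eq]

lemma lie_lie_mul_lie_lie_eq_zero (h : IsLieNilpotentOfClass B 4) (a b c d e f : B) :
    ⁅⁅a, b⁆, c⁆ * ⁅⁅d, e⁆, f⁆ = 0 := by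
  have jacobi_right : ⁅⁅a, b⁆, c⁆ * ⁅⁅d, e⁆, f⁆ + ⁅⁅a, b⁆, c⁆ * ⁅⁅e, f⁆, d⁆
      + ⁅⁅a, b⁆, c⁆ * ⁅⁅f, d⁆, e⁆ = 0 := by
    rw [← mul_add, ← mul_add, lie_lie_add_lie_lie_add_lie_lie, mul_zero]
  have jacobi_left : ⁅⁅a, b⁆, c⁆ * ⁅⁅e, f⁆, d⁆ + ⁅⁅b, c⁆, a⁆ * ⁅⁅e, f⁆, d⁆
      + ⁅⁅c, a⁆, b⁆ * ⁅⁅e, f⁆, d⁆ = 0 := by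
    rw [← add_mul, ← add_mul, lie_lie_add_lie_lie_add_lie_lie, zero_mul]
  have jacobi_moved : ⁅⁅a, b⁆, f⁆ * ⁅⁅d, c⁆, e⁆ + ⁅⁅b, f⁆, a⁆ * ⁅⁅d, c⁆, e⁆
      + ⁅⁅f, a⁆, b⁆ * ⁅⁅d, c⁆, e⁆ = 0 := by
    rw [← add_mul, ← add_mul, lie_lie_add_lie_lie_add_lie_lie, zero_mul]
  -- Each term of `jacobi_moved` is, up to sign, a term of the first two identities.
  have rearrange₁ : ⁅⁅a, b⁆, c⁆ * ⁅⁅f, d⁆, e⁆ = ⁅⁅a, b⁆, f⁆ * ⁅⁅d, c⁆, e⁆ := by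
    rw [h.lie_lie_mul_lie_lie_swap_inner a b c f d e, ← lie_skew c d, neg_lie, mul_neg, neg_neg]
  have rearrange₂ : ⁅⁅b, c⁆, a⁆ * ⁅⁅e, f⁆, d⁆ = -(⁅⁅f, a⁆, b⁆ * ⁅⁅d, c⁆, e⁆) := by
    rw [(h.commute_lie_lie b c a e f d).eq, h.lie_lie_mul_lie_lie_swap_inner e f d b c a,
      h.lie_lie_mul_lie_lie_swap_outer e f b d c a, ← lie_skew a f]
    simp only [neg_lie, neg_mul, neg_neg]
  have rearrange₃ : ⁅⁅c, a⁆, b⁆ * ⁅⁅e, f⁆, d⁆ = -(⁅⁅b, f⁆, a⁆ * ⁅⁅d, c⁆, e⁆) := by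
    rw [(h.commute_lie_lie c a b e f d).eq, h.lie_lie_mul_lie_lie_swap_outer e f d c a b,
      ← lie_skew c a, neg_lie, mul_neg, h.lie_lie_mul_lie_lie_swap_inner b f d a c e, neg_neg]
  linear_combination (norm := abel)
    jacobi_right - jacobi_left - jacobi_moved - rearrange₁ + rearrange₂ + rearrange₃

end IsLieNilpotentOfClass

lemma TwoSidedIdeal.mul_mem_of_mem_span {A : Type*} [Ring A] {S : Set A} {I : TwoSidedIdeal A}
    (hS : ∀ g ∈ S, ∀ t, ∀ g' ∈ S, g * t * g' ∈ I) {x y : A}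
    (hx : x ∈ TwoSidedIdeal.span S) (hy : y ∈ TwoSidedIdeal.span S) : x * y ∈ I := by
  suffices ∀ t, x * t * y ∈ I by simpa using this 1
  induction hx using TwoSidedIdeal.span_induction with
  | mem g hg =>
    induction hy using TwoSidedIdeal.span_induction with
    | mem g' hg' => exact fun t ↦ hS g hg t g' hg'
    | zero => simp
    | add y z _ _ hy hz => exact fun t ↦ by simpa [mul_add] using I.add_mem (hy t) (hz t)
    | neg y _ hy => exact fun t ↦ by simpa using I.neg_mem (hy t)
    | left_absorb a y _ hy => exact fun t ↦ by simpa [mul_assoc] using hy (t * a)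
    | right_absorb b y _ hy =>
      exact fun t ↦ by simpa [mul_assoc] using I.mul_mem_right _ b (hy t)
  | zero => simp
  | add x z _ _ hx hz => exact fun t ↦ by simpa [add_mul] using I.add_mem (hx t) (hz t)
  | neg x _ hx => exact fun t ↦ by simpa using I.neg_mem (hx t)
  | left_absorb a x _ hx => exact fun t ↦ by simpa [mul_assoc] using I.mul_mem_left a _ (hx t)
  | right_absorb b x _ hx => exact fun t ↦ by simpa [mul_assoc] using hx (b * t)

lemma map_lc {A B : Type*} [Ring A] [Ring B] (φ : A →+* B) (a : A) (l : List A) :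
    φ (lc a l) = lc (φ a) (l.map φ) := by
  induction l generalizing a with
  | nil => rfl
  | cons b l ih => simp [lc, ih, Ring.lie_def]

lemma map_lcomm {A B : Type*} [Ring A] [Ring B] (φ : A →+* B) (l : List A) :
    φ (lcomm l) = lcomm (l.map φ) := by
  cases l with
  | nil => exact map_zero φ
  | cons a l => exact map_lc φ a l

lemma isLieNilpotentOfClass_quotient_Tideal (A : Type*) [Ring A] (n : ℕ) :
    IsLieNilpotentOfClass (Tideal A (n + 1)).ringCon.Quotient n := by
  intro l hl
  set π := (Tideal A (n + 1)).ringCon.mk'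
  have hπ : Function.Surjective π := RingCon.mk'_surjective _
  have hlift : l = (l.map (Function.surjInv hπ)).map π := by
    rw [List.map_map, (Function.rightInverse_surjInv hπ).comp_eq_id, List.map_id]
  rw [hlift, ← map_lcomm, ← TwoSidedIdeal.mem_ker, TwoSidedIdeal.ker_ringCon_mk']
  exact TwoSidedIdeal.subset_span ⟨_, by simpa using hl, rfl⟩

lemma lie_lie_mul_lie_lie_mem_Tideal_five {A : Type*} [Ring A] (a b c d e f : A) :
    ⁅⁅a, b⁆, c⁆ * ⁅⁅d, e⁆, f⁆ ∈ Tideal A 5 := by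
  have h := (isLieNilpotentOfClass_quotient_Tideal A 4).lie_lie_mul_lie_lie_eq_zero
    (RingCon.mk' _ a) (RingCon.mk' _ b) (RingCon.mk' _ c) (RingCon.mk' _ d) (RingCon.mk' _ e)
    (RingCon.mk' _ f)
  rw [← (Tideal A 5).ker_ringCon_mk', TwoSidedIdeal.mem_ker, ← h]
  simp [Ring.lie_def]

lemma lie_lie_mul_mul_lie_lie_mem_Tideal_five {A : Type*} [Ring A] (a b c t d e f : A) :
    ⁅⁅a, b⁆, c⁆ * t * ⁅⁅d, e⁆, f⁆ ∈ Tideal A 5 := by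
  have move_past : ⁅⁅a, b⁆, c⁆ * t * ⁅⁅d, e⁆, f⁆ =
      t * (⁅⁅a, b⁆, c⁆ * ⁅⁅d, e⁆, f⁆) + ⁅⁅⁅a, b⁆, c⁆, t⁆ * ⁅⁅d, e⁆, f⁆ := by
    simp only [Ring.lie_def]
    noncomm_ring
  rw [move_past]
  exact (Tideal A 5).add_mem
    ((Tideal A 5).mul_mem_left t _ (lie_lie_mul_lie_lie_mem_Tideal_five ..))
    (lie_lie_mul_lie_lie_mem_Tideal_five ..)

theorem statement_19_general (A : Type*) [Ring A]
    (x y : A) (hx : x ∈ Tideal A 3) (hy : y ∈ Tideal A 3) :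
    x * y ∈ Tideal A 5 := by
  refine TwoSidedIdeal.mul_mem_of_mem_span ?_ hx hy
  rintro _ ⟨l, hl, rfl⟩ t _ ⟨l', hl', rfl⟩
  obtain ⟨a, b, c, rfl⟩ := List.length_eq_three.mp hl
  obtain ⟨d, e, f, rfl⟩ := List.length_eq_three.mp hl'
  exact lie_lie_mul_mul_lie_lie_mem_Tideal_five a b c t d e f

/-- `T⁽³⁾(A) T⁽³⁾(A) ⊆ T⁽⁵⁾(A)` over an arbitrary commutative unital ring. -/
theorem statement_19 (R : Type*) [CommRing R] (A : Type*) [Ring A] [Algebra R A]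
    (x y : A) (hx : x ∈ Tideal A 3) (hy : y ∈ Tideal A 3) :
    x * y ∈ Tideal A 5 :=
  statement_19_general A x y hx hy
end
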